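/- Let G be a graph with a Δ-disk representation (D_v)_{v ∈ V(G)}, and let v₁, …, v₉ be nine pairwise non-adjacent vertices listed in increasing co-comparability order (i.e., for i < j: x_{vᵢ} < x_{v_j}, y_{vᵢ} < y_{v_j} and D_{vᵢ} ∩ D_{v_j} = ∅). If a vertex v is adjacent to all of v₁, …, v₉, then v contains v₅, that is, N[v₅] ⊆ N[v]. -/

import Mathlib

/-- A Δ-disk representation of a simple graph `G`: each vertex `v` gets a
closed disk with center `c v = (x_v, y_v)`, `x_v > 0`, `y_v > 0`, and radius
`r v` with `max x_v y_v ≤ r v < √(x_v² + y_v²)` (the disk meets both axes but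
misses the origin); distinct vertices are adjacent iff their disks intersect. -/
def IsDeltaDiskRep {V : Type*} (G : SimpleGraph V)
    (c : V → EuclideanSpace ℝ (Fin 2)) (r : V → ℝ) : Prop :=
  (∀ v, 0 < c v 0) ∧ (∀ v, 0 < c v 1) ∧
  (∀ v, max (c v 0) (c v 1) ≤ r v) ∧ (∀ v, r v < dist (c v) 0) ∧
  ∀ u v, u ≠ v → (G.Adj u v ↔
    (Metric.closedBall (c u) (r u) ∩ Metric.closedBall (c v) (r v)).Nonempty)

private lemma sq_dist_eq (p q : EuclideanSpace ℝ (Fin 2)) :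
    dist p q ^ 2 = (p 0 - q 0) ^ 2 + (p 1 - q 1) ^ 2 := by
  rw [EuclideanSpace.dist_eq, Real.sq_sqrt (by positivity)]
  simp [Fin.sum_univ_two, Real.dist_eq, sq_abs]

private lemma sq_norm0 (p : EuclideanSpace ℝ (Fin 2)) :
    dist p 0 ^ 2 = (p 0) ^ 2 + (p 1) ^ 2 := by
  have h := sq_dist_eq p 0
  have h0 : (0 : EuclideanSpace ℝ (Fin 2)) 0 = 0 := rfl
  have h1 : (0 : EuclideanSpace ℝ (Fin 2)) 1 = 0 := rfl
  rw [h0, h1] at h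
  simpa using h

private lemma ball_inter_iff {c₁ c₂ : EuclideanSpace ℝ (Fin 2)} {r₁ r₂ : ℝ}
    (h₁ : 0 ≤ r₁) (h₂ : 0 ≤ r₂) :
    (Metric.closedBall c₁ r₁ ∩ Metric.closedBall c₂ r₂).Nonempty ↔
      dist c₁ c₂ ≤ r₁ + r₂ := by
  constructor
  · exact Metric.dist_le_add_of_nonempty_closedBall_inter_closedBall
  · intro hd
    rcases eq_or_lt_of_le (by linarith : (0:ℝ) ≤ r₁ + r₂) with h0 | h0
    · refine ⟨c₁, Metric.mem_closedBall_self h₁, ?_⟩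
      have hd0 : dist c₁ c₂ = 0 := le_antisymm (by linarith) dist_nonneg
      simp only [Metric.mem_closedBall]
      rw [hd0]
      exact h₂
    · have hne : r₁ + r₂ ≠ 0 := ne_of_gt h0
      set t := r₁ / (r₁ + r₂) with ht
      have ht0 : 0 ≤ t := div_nonneg h₁ h0.le
      have ht1 : t ≤ 1 := by
        rw [ht, div_le_one h0]; linarith
      refine ⟨c₁ + t • (c₂ - c₁), ?_, ?_⟩
      · simp only [Metric.mem_closedBall]
        have e1 : c₁ + t • (c₂ - c₁) - c₁ = t • (c₂ - c₁) := by abel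
        rw [dist_eq_norm, e1, norm_smul, Real.norm_eq_abs, abs_of_nonneg ht0]
        have hn : ‖c₂ - c₁‖ = dist c₁ c₂ := by rw [← dist_eq_norm, dist_comm]
        rw [hn]
        calc t * dist c₁ c₂ ≤ t * (r₁ + r₂) :=
              mul_le_mul_of_nonneg_left hd ht0
          _ = r₁ := by rw [ht]; field_simp
      · simp only [Metric.mem_closedBall]
        have e2 : c₁ + t • (c₂ - c₁) - c₂ = (1 - t) • (c₁ - c₂) := by
          rw [sub_smul (1:ℝ) t (c₁ - c₂), one_smul, smul_sub t c₂ c₁,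
            smul_sub t c₁ c₂]
          abel
        rw [dist_eq_norm, e2, norm_smul, Real.norm_eq_abs,
          abs_of_nonneg (by linarith : (0:ℝ) ≤ 1 - t)]
        have hn : ‖c₁ - c₂‖ = dist c₁ c₂ := by rw [← dist_eq_norm]
        rw [hn]
        have hteq : (1 - t) * (r₁ + r₂) = r₂ := by
          rw [ht]; field_simp; ring
        calc (1 - t) * dist c₁ c₂ ≤ (1 - t) * (r₁ + r₂) :=
              mul_le_mul_of_nonneg_left hd (by linarith)
          _ = r₂ := hteq

private lemma norm_le_add {x y A : ℝ} (hx : 0 < x) (hy : 0 < y) (hA0 : 0 ≤ A)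
    (hA2 : A ^ 2 = x ^ 2 + y ^ 2) : A ≤ x + y := by
  nlinarith [mul_pos hx hy]

private lemma radius_sum_lt {xi yi xj yj ri rj Aj : ℝ} (hxi : 0 < xi) (hyi : 0 < yi)
    (hox : xi < xj) (hoy : yi < yj) (hAj0 : 0 ≤ Aj) (hAj2 : Aj ^ 2 = xj ^ 2 + yj ^ 2)
    (hsep : (ri + rj) ^ 2 < (xi - xj) ^ 2 + (yi - yj) ^ 2) : ri + rj < Aj := by
  have h1 : (ri + rj) ^ 2 < Aj ^ 2 := by
    nlinarith [mul_pos hxi (show (0:ℝ) < 2 * xj - xi by linarith),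
      mul_pos hyi (show (0:ℝ) < 2 * yj - yi by linarith)]
  nlinarith [h1, hAj0, sq_nonneg (ri + rj)]

private lemma grow4 {xi yi ri xj yj rj : ℝ}
    (hxi : 0 < xi) (hyi : 0 < yi) (hxj : 0 < xj) (hyj : 0 < yj)
    (hrix : xi ≤ ri) (hriy : yi ≤ ri) (hrjx : xj ≤ rj) (hrjy : yj ≤ rj)
    (hox : xi < xj) (hoy : yi < yj)
    (hsep : (ri + rj) ^ 2 < (xi - xj) ^ 2 + (yi - yj) ^ 2) :
    4 * max xi yi < max xj yj := by
  have hsum : 0 ≤ ri + rj := by linarith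
  rcases le_total xi yi with h1 | h1 <;> rcases le_total xj yj with h2 | h2
  · rw [max_eq_right h1, max_eq_right h2]
    nlinarith [mul_nonneg (show (0:ℝ) ≤ ri + rj - yi - yj by linarith)
        (show (0:ℝ) ≤ ri + rj + yi + yj by linarith),
      mul_pos hxi (show (0:ℝ) < 2 * xj - xi by linarith),
      mul_le_mul h2 h2 hxj.le hyj.le, mul_pos hyi hyj]
  · rw [max_eq_right h1, max_eq_left h2]
    nlinarith [mul_nonneg (show (0:ℝ) ≤ ri + rj - yi - xj by linarith)
        (show (0:ℝ) ≤ ri + rj + yi + xj by linarith),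
      mul_pos hxi (show (0:ℝ) < 2 * xj - xi by linarith),
      mul_nonneg (show (0:ℝ) ≤ xj - yj by linarith)
        (show (0:ℝ) ≤ (xj - yi) + (yj - yi) by linarith),
      mul_pos hyi hxj]
  · rw [max_eq_left h1, max_eq_right h2]
    nlinarith [mul_nonneg (show (0:ℝ) ≤ ri + rj - xi - yj by linarith)
        (show (0:ℝ) ≤ ri + rj + xi + yj by linarith),
      mul_pos hyi (show (0:ℝ) < 2 * yj - yi by linarith),
      mul_nonneg (show (0:ℝ) ≤ yj - xj by linarith)
        (show (0:ℝ) ≤ (yj - xi) + (xj - xi) by linarith),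
      mul_pos hxi hyj]
  · rw [max_eq_left h1, max_eq_left h2]
    nlinarith [mul_nonneg (show (0:ℝ) ≤ ri + rj - xi - xj by linarith)
        (show (0:ℝ) ≤ ri + rj + xi + xj by linarith),
      mul_pos hyi (show (0:ℝ) < 2 * yj - yi by linarith),
      mul_le_mul h2 h2 hyj.le hxj.le, mul_pos hxi hxj]

private lemma L1 {a b rv xw yw rw : ℝ} (hb : 0 ≤ b) (hxw : 0 ≤ xw)
    (hrva : a ≤ rv) (hrwy : yw ≤ rw) (hrv : 0 < rv) (hrw : 0 < rw)
    (hxa : xw ≤ a) (hby : b ≤ yw)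
    (hsep : (rv + rw) ^ 2 < (a - xw) ^ 2 + (b - yw) ^ 2) : False := by
  nlinarith [mul_pos hrv hrw,
    mul_nonneg hxw (show (0:ℝ) ≤ 2 * a - xw by linarith),
    mul_nonneg hb (show (0:ℝ) ≤ 2 * yw - b by linarith)]

private lemma stepA1 {a b xw yw rv rw : ℝ} (ha : 0 < a) (hxw : 0 ≤ xw)
    (hyw : 0 ≤ yw) (hyb : yw ≤ b) (hba : b ≤ a) (hrva : a ≤ rv) (hrwx : xw ≤ rw)
    (hsep : (rv + rw) ^ 2 < (a - xw) ^ 2 + (b - yw) ^ 2) : 4 * xw < a := by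
  have h1 : 4 * (a * xw) < (b - yw) ^ 2 := by
    nlinarith [mul_nonneg (show (0:ℝ) ≤ rv + rw - a - xw by linarith)
      (show (0:ℝ) ≤ rv + rw + a + xw by linarith)]
  have h2 : (b - yw) ^ 2 ≤ a ^ 2 := by nlinarith
  nlinarith [h1, h2, ha]

private lemma stepA2 {a b xw yw rv rw Av Aw : ℝ} (ha : 0 < a) (hxw : 0 < xw)
    (hyw : 0 < yw) (hyb : yw ≤ b)
    (h4xw : 4 * xw < a) (hrva : a ≤ rv) (hrvb : b ≤ rv)
    (hrwx : xw ≤ rw) (hAv : rv < Av) (hAv0 : 0 ≤ Av) (hAv2 : Av ^ 2 = a ^ 2 + b ^ 2)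
    (hAw : rw < Aw) (hAw0 : 0 ≤ Aw) (hAw2 : Aw ^ 2 = xw ^ 2 + yw ^ 2) (hba : b ≤ a)
    (hsep : (rv + rw) ^ 2 < (a - xw) ^ 2 + (b - yw) ^ 2) :
    xw + rw < (8 / 3) * (Av - rv) := by
  have hrw0 : 0 < rw := lt_of_lt_of_le hxw hrwx
  have hrv0 : 0 < rv := lt_of_lt_of_le ha hrva
  have hkw : 0 < Aw ^ 2 - rw ^ 2 := by nlinarith
  have hid : (Av ^ 2 - rv ^ 2) - (Aw ^ 2 - rw ^ 2)
      - (2 * (xw + rw) * (a - xw) + 2 * yw * (b - yw))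
      = ((a - xw) ^ 2 + (b - yw) ^ 2 - (rv + rw) ^ 2)
        + 2 * rw * (rv + rw - a + xw) := by
    rw [hAv2, hAw2]; ring
  have hm : 0 < 2 * rw * (rv + rw - a + xw) :=
    mul_pos (by linarith) (by linarith)
  have hprod : 0 ≤ 2 * yw * (b - yw) :=
    mul_nonneg (by linarith) (by linarith)
  have h4 : 2 * (xw + rw) * (a - xw) < Av ^ 2 - rv ^ 2 := by linarith
  have hAvab : Av ≤ a + b := norm_le_add ha (by linarith) hAv0 hAv2
  have h5' : (Av - rv) * (Av + rv) ≤ (Av - rv) * (4 * a) :=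
    mul_le_mul_of_nonneg_left (by linarith) (by linarith)
  have h5 : Av ^ 2 - rv ^ 2 ≤ (Av - rv) * (4 * a) := by nlinarith [h5']
  have hm2 : 2 * (xw + rw) * ((3 / 4) * a) ≤ 2 * (xw + rw) * (a - xw) :=
    mul_le_mul_of_nonneg_left (by linarith) (by linarith)
  nlinarith [ha, hm2, h4, h5]

private lemma caseA {a b rv Av xw yw rw Aw P Q : ℝ}
    (ha : 0 < a) (hb : 0 < b) (hxw : 0 < xw) (hyw : 0 < yw)
    (hrva : a ≤ rv) (hrvb : b ≤ rv) (hAv : rv < Av) (hAv0 : 0 ≤ Av)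
    (hAv2 : Av ^ 2 = a ^ 2 + b ^ 2)
    (hrwx : xw ≤ rw) (hrwy : yw ≤ rw) (hAw : rw < Aw) (hAw0 : 0 ≤ Aw)
    (hAw2 : Aw ^ 2 = xw ^ 2 + yw ^ 2)
    (hxa : xw ≤ a) (hyb : yw ≤ b) (hba : b ≤ a)
    (hdip : Av - rv ≤ P) (hreach : Q ≤ Aw + rw) (hPQ : 16 * P < Q)
    (hsep : (rv + rw) ^ 2 < (a - xw) ^ 2 + (b - yw) ^ 2) : False := by
  have h4xw : 4 * xw < a :=
    stepA1 ha hxw.le hyw.le hyb hba hrva hrwx hsep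
  have h6 : xw + rw < (8 / 3) * (Av - rv) :=
    stepA2 ha hxw hyw hyb h4xw hrva hrvb hrwx hAv hAv0 hAv2 hAw hAw0 hAw2 hba hsep
  have hAwab : Aw ≤ xw + yw := norm_le_add hxw hyw hAw0 hAw2
  linarith

private lemma stepB1 {a b xw yw rv rw : ℝ} (hxw : 0 < xw) (ha : 0 ≤ a)
    (hb : 0 ≤ b) (hby : b ≤ yw) (hyx : yw ≤ xw) (hrva : a ≤ rv) (hrwx : xw ≤ rw)
    (hsep : (rv + rw) ^ 2 < (a - xw) ^ 2 + (b - yw) ^ 2) : 4 * a < xw := by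
  have h1 : 4 * (a * xw) < (yw - b) ^ 2 := by
    nlinarith [mul_nonneg (show (0:ℝ) ≤ rv + rw - a - xw by linarith)
      (show (0:ℝ) ≤ rv + rw + a + xw by linarith)]
  have h2 : (yw - b) ^ 2 ≤ xw ^ 2 := by nlinarith
  nlinarith [h1, h2, hxw]

private lemma stepB2 {a b xw yw rv rw Av Aw : ℝ} (ha : 0 < a) (hb : 0 < b)
    (hxw : 0 < xw) (hby : b ≤ yw)
    (h4a : 4 * a < xw) (hrwx : xw ≤ rw) (hrwy : yw ≤ rw)
    (hrva : a ≤ rv) (hAw : rw < Aw) (hAw0 : 0 ≤ Aw) (hAw2 : Aw ^ 2 = xw ^ 2 + yw ^ 2)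
    (hAv : rv < Av) (hAv0 : 0 ≤ Av) (hAv2 : Av ^ 2 = a ^ 2 + b ^ 2) (hyx : yw ≤ xw)
    (hsep : (rv + rw) ^ 2 < (a - xw) ^ 2 + (b - yw) ^ 2) :
    a + rv < (8 / 3) * (Aw - rw) := by
  have hrw0 : 0 < rw := lt_of_lt_of_le hxw hrwx
  have hrv0 : 0 < rv := lt_of_lt_of_le ha hrva
  have hkv : 0 < Av ^ 2 - rv ^ 2 := by nlinarith
  have hid : (Aw ^ 2 - rw ^ 2) - (Av ^ 2 - rv ^ 2)
      - (2 * (a + rv) * (xw - a) + 2 * b * (yw - b))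
      = ((a - xw) ^ 2 + (b - yw) ^ 2 - (rv + rw) ^ 2)
        + 2 * rv * (rv + rw - xw + a) := by
    rw [hAv2, hAw2]; ring
  have hm : 0 < 2 * rv * (rv + rw - xw + a) :=
    mul_pos (by linarith) (by linarith)
  have hprod : 0 ≤ 2 * b * (yw - b) :=
    mul_nonneg (by linarith) (by linarith)
  have t5 : 2 * (a + rv) * (xw - a) < Aw ^ 2 - rw ^ 2 := by linarith
  have hAwab : Aw ≤ xw + yw := norm_le_add hxw (by linarith) hAw0 hAw2
  have t6' : (Aw - rw) * (Aw + rw) ≤ (Aw - rw) * (4 * xw) :=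
    mul_le_mul_of_nonneg_left (by linarith) (by linarith)
  have t6 : Aw ^ 2 - rw ^ 2 ≤ (Aw - rw) * (4 * xw) := by nlinarith [t6']
  have hm2 : 2 * (a + rv) * ((3 / 4) * xw) ≤ 2 * (a + rv) * (xw - a) :=
    mul_le_mul_of_nonneg_left (by linarith) (by linarith)
  nlinarith [hxw, hm2, t5, t6]

private lemma caseB {a b rv Av xw yw rw Aw P Q : ℝ}
    (ha : 0 < a) (hb : 0 < b) (hxw : 0 < xw) (hyw : 0 < yw)
    (hrva : a ≤ rv) (hrvb : b ≤ rv) (hAv : rv < Av) (hAv0 : 0 ≤ Av)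
    (hAv2 : Av ^ 2 = a ^ 2 + b ^ 2)
    (hrwx : xw ≤ rw) (hrwy : yw ≤ rw) (hAw : rw < Aw) (hAw0 : 0 ≤ Aw)
    (hAw2 : Aw ^ 2 = xw ^ 2 + yw ^ 2)
    (hax : a ≤ xw) (hby : b ≤ yw) (hyx : yw ≤ xw)
    (hdip : Aw - rw ≤ P) (hreach : Q ≤ Av + rv) (hPQ : 16 * P < Q)
    (hsep : (rv + rw) ^ 2 < (a - xw) ^ 2 + (b - yw) ^ 2) : False := by
  have h4a : 4 * a < xw :=
    stepB1 hxw ha.le hb.le hby hyx hrva hrwx hsep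
  have t7 : a + rv < (8 / 3) * (Aw - rw) :=
    stepB2 ha hb hxw hby h4a hrwx hrwy hrva hAw hAw0 hAw2 hAv hAv0 hAv2 hyx hsep
  have hAvab : Av ≤ a + b := norm_le_add ha hb hAv0 hAv2
  linarith

/-- In a Δ-disk graph, if `v₁ ≺ ⋯ ≺ v₉` is an independent set of size 9 sorted
in increasing co-comparability order and `v` is adjacent to all of them, then
`v` contains `v₅`, i.e. `N[v₅] ⊆ N[v]`. -/
theorem deltaDisk_adjacent_to_nine_contains_middle
    {V : Type*} (G : SimpleGraph V)
    (c : V → EuclideanSpace ℝ (Fin 2)) (r : V → ℝ)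
    (h : IsDeltaDiskRep G c r)
    (vs : Fin 9 → V)
    (hindep : ∀ i j : Fin 9, i ≠ j → ¬ G.Adj (vs i) (vs j))
    (hord : ∀ i j : Fin 9, i < j →
      c (vs i) 0 < c (vs j) 0 ∧ c (vs i) 1 < c (vs j) 1 ∧
      Metric.closedBall (c (vs i)) (r (vs i)) ∩
        Metric.closedBall (c (vs j)) (r (vs j)) = ∅)
    (v : V) (hv : ∀ i : Fin 9, G.Adj v (vs i)) :
    ∀ w : V, (w = vs 4 ∨ G.Adj (vs 4) w) → (w = v ∨ G.Adj v w) := by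
  obtain ⟨h0x, h0y, hmax, hrA, hadj⟩ := h
  have hxr : ∀ u, c u 0 ≤ r u := fun u => le_trans (le_max_left _ _) (hmax u)
  have hyr : ∀ u, c u 1 ≤ r u := fun u => le_trans (le_max_right _ _) (hmax u)
  have hr0 : ∀ u, 0 < r u := fun u => lt_of_lt_of_le (h0x u) (hxr u)
  have hA0 : ∀ u, (0:ℝ) ≤ dist (c u) 0 := fun u => dist_nonneg
  have hA2 : ∀ u, dist (c u) 0 ^ 2 = (c u 0) ^ 2 + (c u 1) ^ 2 :=
    fun u => sq_norm0 (c u)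
  have sep2 : ∀ i j : Fin 9, i < j →
      (r (vs i) + r (vs j)) ^ 2
        < (c (vs i) 0 - c (vs j) 0) ^ 2 + (c (vs i) 1 - c (vs j) 1) ^ 2 := by
    intro i j hij
    obtain ⟨hx, hy, hemp⟩ := hord i j hij
    have hlt : r (vs i) + r (vs j) < dist (c (vs i)) (c (vs j)) := by
      by_contra hcon
      push_neg at hcon
      have hne := (ball_inter_iff (hr0 (vs i)).le (hr0 (vs j)).le).mpr hcon
      rw [hemp] at hne
      exact Set.not_nonempty_empty hne
    have hnn : 0 ≤ r (vs i) + r (vs j) := by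
      have := hr0 (vs i); have := hr0 (vs j); linarith
    have h2 : (r (vs i) + r (vs j)) ^ 2 < dist (c (vs i)) (c (vs j)) ^ 2 := by
      nlinarith [hlt, hnn]
    rw [sq_dist_eq] at h2
    exact h2
  have touch : ∀ i : Fin 9, dist (c v) (c (vs i)) ≤ r v + r (vs i) := fun i =>
    Metric.dist_le_add_of_nonempty_closedBall_inter_closedBall
      ((hadj v (vs i) (hv i).ne).mp (hv i))
  have gstep : ∀ i j : Fin 9, i < j →
      4 * max (c (vs i) 0) (c (vs i) 1) < max (c (vs j) 0) (c (vs j) 1) := by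
    intro i j hij
    exact grow4 (h0x _) (h0y _) (h0x _) (h0y _) (hxr _) (hyr _) (hxr _) (hyr _)
      (hord i j hij).1 (hord i j hij).2.1 (sep2 i j hij)
  have g01 := gstep 0 1 (by decide)
  have g12 := gstep 1 2 (by decide)
  have g23 := gstep 2 3 (by decide)
  have g45 := gstep 4 5 (by decide)
  have g56 := gstep 5 6 (by decide)
  have g67 := gstep 6 7 (by decide)
  have q34 : r (vs 3) + r (vs 4) < dist (c (vs 4)) 0 :=
    radius_sum_lt (h0x _) (h0y _) (hord 3 4 (by decide)).1
      (hord 3 4 (by decide)).2.1 (hA0 _) (hA2 _) (sep2 3 4 (by decide))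
  have q78 : r (vs 7) + r (vs 8) < dist (c (vs 8)) 0 :=
    radius_sum_lt (h0x _) (h0y _) (hord 7 8 (by decide)).1
      (hord 7 8 (by decide)).2.1 (hA0 _) (hA2 _) (sep2 7 8 (by decide))
  have hA0le : dist (c (vs 0)) 0 ≤ c (vs 0) 0 + c (vs 0) 1 :=
    norm_le_add (h0x _) (h0y _) (hA0 _) (hA2 _)
  have hA4le : dist (c (vs 4)) 0 ≤ c (vs 4) 0 + c (vs 4) 1 :=
    norm_le_add (h0x _) (h0y _) (hA0 _) (hA2 _)
  have chainA : 16 * (dist (c (vs 0)) 0 + r (vs 0))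
      < dist (c (vs 4)) 0 - r (vs 4) := by
    have h1 : max (c (vs 3) 0) (c (vs 3) 1) ≤ r (vs 3) := hmax _
    have h2 : c (vs 0) 0 ≤ max (c (vs 0) 0) (c (vs 0) 1) := le_max_left _ _
    have h3 : c (vs 0) 1 ≤ max (c (vs 0) 0) (c (vs 0) 1) := le_max_right _ _
    have h4 : r (vs 0) < dist (c (vs 0)) 0 := hrA _
    linarith
  have chainB : 16 * (dist (c (vs 4)) 0 + r (vs 4))
      < dist (c (vs 8)) 0 - r (vs 8) := by
    have h1 : max (c (vs 7) 0) (c (vs 7) 1) ≤ r (vs 7) := hmax _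
    have h2 : c (vs 4) 0 ≤ max (c (vs 4) 0) (c (vs 4) 1) := le_max_left _ _
    have h3 : c (vs 4) 1 ≤ max (c (vs 4) 0) (c (vs 4) 1) := le_max_right _ _
    have h4 : r (vs 4) < dist (c (vs 4)) 0 := hrA _
    linarith
  have dipv : dist (c v) 0 - r v ≤ dist (c (vs 0)) 0 + r (vs 0) := by
    have ht := dist_triangle (c v) (c (vs 0)) 0
    have h := touch 0
    linarith
  have reachv : dist (c (vs 8)) 0 - r (vs 8) ≤ dist (c v) 0 + r v := by
    have ht := dist_triangle (c (vs 8)) (c v) 0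
    have h := touch 8
    rw [dist_comm (c (vs 8)) (c v)] at ht
    linarith
  intro w hw
  rcases hw with hw | hw
  · subst hw
    exact Or.inr (hv 4)
  · by_cases hwv : w = v
    · exact Or.inl hwv
    · right
      have hvw : v ≠ w := fun hh => hwv hh.symm
      rw [hadj v w hvw, ball_inter_iff (hr0 v).le (hr0 w).le]
      by_contra hcon
      push_neg at hcon
      have touchw : dist (c (vs 4)) (c w) ≤ r (vs 4) + r w :=
        Metric.dist_le_add_of_nonempty_closedBall_inter_closedBall
          ((hadj (vs 4) w hw.ne).mp hw)
      have dipw : dist (c w) 0 - r w ≤ dist (c (vs 4)) 0 + r (vs 4) := by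
        have ht := dist_triangle (c w) (c (vs 4)) 0
        have h2 : dist (c w) (c (vs 4)) ≤ r (vs 4) + r w := by
          rw [dist_comm]; exact touchw
        linarith
      have reachw : dist (c (vs 4)) 0 - r (vs 4) ≤ dist (c w) 0 + r w := by
        have ht := dist_triangle (c (vs 4)) (c w) 0
        linarith
      have hsep : (r v + r w) ^ 2 < (c v 0 - c w 0) ^ 2 + (c v 1 - c w 1) ^ 2 := by
        have hnn : 0 ≤ r v + r w := by
          have := hr0 v; have := hr0 w; linarith
        have h2 : (r v + r w) ^ 2 < dist (c v) (c w) ^ 2 := by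
          nlinarith [hcon, hnn]
        rw [sq_dist_eq] at h2
        exact h2
      rcases le_or_gt (c w 0) (c v 0) with hxa | hax
      · have hyb : c w 1 ≤ c v 1 := by
          by_contra hyb
          push_neg at hyb
          exact L1 (h0y v).le (h0x w).le (hxr v) (hyr w) (hr0 v) (hr0 w)
            hxa hyb.le hsep
        rcases le_total (c v 1) (c v 0) with hba | hab
        · exact caseA (h0x v) (h0y v) (h0x w) (h0y w) (hxr v) (hyr v) (hrA v)
            (hA0 v) (hA2 v) (hxr w) (hyr w) (hrA w) (hA0 w) (hA2 w)
            hxa hyb hba dipv reachw chainA hsep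
        · exact caseA (h0y v) (h0x v) (h0y w) (h0x w) (hyr v) (hxr v) (hrA v)
            (hA0 v) (by rw [hA2 v]; ring) (hyr w) (hxr w) (hrA w) (hA0 w)
            (by rw [hA2 w]; ring) hyb hxa hab dipv reachw chainA
            (by linarith [hsep])
      · have hby : c v 1 < c w 1 := by
          by_contra hby
          push_neg at hby
          exact L1 (h0y w).le (h0x v).le (hxr w) (hyr v) (hr0 w) (hr0 v)
            hax.le hby (by linarith [hsep])
        rcases le_total (c w 1) (c w 0) with hyx | hxy
        · exact caseB (h0x v) (h0y v) (h0x w) (h0y w) (hxr v) (hyr v) (hrA v)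
            (hA0 v) (hA2 v) (hxr w) (hyr w) (hrA w) (hA0 w) (hA2 w)
            hax.le hby.le hyx dipw reachv chainB hsep
        · exact caseB (h0y v) (h0x v) (h0y w) (h0x w) (hyr v) (hxr v) (hrA v)
            (hA0 v) (by rw [hA2 v]; ring) (hyr w) (hxr w) (hrA w) (hA0 w)
            (by rw [hA2 w]; ring) hby.le hax.le hxy dipw reachv chainB
            (by linarith [hsep])
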